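/- arXiv:2410.20541 — 6 statements merged into one kernel-verified Lean document; each statement's English description precedes it below -/
import Mathlib

section
/- For third-order tensors T of size n×m×s and S of size m×r×s, the block circulant matrix of their T-product equals the product of their block circulant matrices: bcirc(T ⋆ S) = bcirc(T) · bcirc(S). -/
open Matrix Complex

/-- A third-order tensor with `s` frontal slices of size `n × m`. -/
abbrev Tensor3 (n m s : ℕ) (R : Type*) := ZMod s → Matrix (Fin n) (Fin m) R

/-- Block circulant matrix of a third-order tensor: the `(i,j)` block is slice `i - j`. -/
def bcirc {n m s : ℕ} {R : Type*} (T : Tensor3 n m s R) :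
    Matrix (ZMod s × Fin n) (ZMod s × Fin m) R :=
  fun ia jb => T (ia.1 - jb.1) ia.2 jb.2

/-- Unfold a tensor by stacking its frontal slices vertically. -/
def unfold {m r s : ℕ} {R : Type*} (S : Tensor3 m r s R) :
    Matrix (ZMod s × Fin m) (Fin r) R :=
  fun ia b => S ia.1 ia.2 b

/-- The T-product: `fold (bcirc T * unfold S)`. -/
def tProd {n m r s : ℕ} [NeZero s] (T : Tensor3 n m s ℝ) (S : Tensor3 m r s ℝ) :
    Tensor3 n r s ℝ :=
  fun k a b => (bcirc T * unfold S) (k, a) b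

/-- The T-identity tensor: first frontal slice is the identity, the rest are zero. -/
def tId {n s : ℕ} : Tensor3 n n s ℝ :=
  fun k => if k = 0 then 1 else 0

/-- The T-transpose: transpose each frontal slice and reverse the order of slices 2..s. -/
def ttrans {n m s : ℕ} {R : Type*} (T : Tensor3 n m s R) : Tensor3 m n s R :=
  fun k => (T (-k))ᵀ

/-- `bcirc (T ⋆ S) = bcirc T * bcirc S`. -/
theorem bcirc_tprod {n m r s : ℕ} [NeZero s]
    (T : Tensor3 n m s ℝ) (S : Tensor3 m r s ℝ) :
    bcirc (tProd T S) = bcirc T * bcirc S := by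
  ext ⟨k, a⟩ ⟨j, b⟩
  simp only [bcirc, tProd, Matrix.mul_apply, unfold]
  exact Fintype.sum_equiv ((Equiv.addRight j).prodCongr (Equiv.refl _)) _ _
    (fun x => by simp [sub_sub, add_comm])
end

section
/- The T-product is associative: for tensors T ∈ ℝ^{n×m×s}, S ∈ ℝ^{m×p×s}, R ∈ ℝ^{p×q×s}, (T ⋆ S) ⋆ R = T ⋆ (S ⋆ R). -/
open Matrix Complex

/-- the T-product is associative. -/
theorem tprod_assoc {n m p q s : ℕ} [NeZero s]
    (T : Tensor3 n m s ℝ) (S : Tensor3 m p s ℝ) (R : Tensor3 p q s ℝ) :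
    tProd (tProd T S) R = tProd T (tProd S R) := by
  funext k a b
  simp only [tProd, bcirc, unfold, Matrix.mul_apply, Fintype.sum_prod_type,
    Finset.sum_mul, Finset.mul_sum]
  conv_rhs => enter [2, x]; rw [Finset.sum_comm]
  conv_rhs => rw [Finset.sum_comm]
  conv_rhs => enter [2, j]; rw [← Equiv.sum_comp (Equiv.addRight j) fun x =>
    ∑ d : Fin m, ∑ c : Fin p, T (k - x) a d * (S (x - j) d c * R j c b)]
  conv_lhs => enter [2, j]; rw [Finset.sum_comm]; enter [2, i]; rw [Finset.sum_comm]
  refine Finset.sum_congr rfl fun j _ => Finset.sum_congr rfl fun i _ =>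
    Finset.sum_congr rfl fun d _ => Finset.sum_congr rfl fun c _ => ?_
  simp only [Equiv.coe_addRight, add_sub_cancel_right, sub_add_eq_sub_sub,
    sub_right_comm, mul_assoc]
end

section
/- For tensors T ∈ ℝ^{n×m×s} and S ∈ ℝ^{m×r×s}, (T ⋆ S)^⊤ = S^⊤ ⋆ T^⊤. -/
open Matrix Complex

/-- `(T ⋆ S)ᵀ = Sᵀ ⋆ Tᵀ`. -/
theorem ttrans_tprod {n m r s : ℕ} [NeZero s]
    (T : Tensor3 n m s ℝ) (S : Tensor3 m r s ℝ) :
    ttrans (tProd T S) = tProd (ttrans S) (ttrans T) := by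
  funext k a b
  simp only [ttrans, tProd, Matrix.mul_apply, Matrix.transpose_apply, bcirc, unfold]
  rw [Fintype.sum_prod_type, Fintype.sum_prod_type]
  refine Fintype.sum_equiv (Equiv.addLeft k) _ _ (fun x => Finset.sum_congr rfl (fun y _ => ?_))
  simp only [Equiv.coe_addLeft]
  ring_nf
end

section
/- The block circulant matrix bcirc(T) of a tensor T ∈ ℝ^{n×m×s} is block diagonalized by the discrete Fourier transform: (F_s ⊗ I_n) · bcirc(T) · (F_s ⊗ I_m)^* is a block diagonal matrix with s diagonal blocks of size n×m, where the j-th block is the j-th component of the discrete Fourier transform (along the third mode) of the frontal slices of T. -/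
open Matrix Complex

/-- The unitary discrete Fourier transform matrix of size `s`. -/
noncomputable def dft (s : ℕ) : Matrix (ZMod s) (ZMod s) ℂ :=
  fun j k => Complex.exp (-2 * Real.pi * Complex.I * (j.val * k.val) / s) / Real.sqrt s

/-- The `j`-th Fourier-domain block of a tensor: the `j`-th component of the DFT of the
frontal slices along the third mode. -/
noncomputable def fourierBlock {n m s : ℕ} [NeZero s]
    (T : Tensor3 n m s ℂ) (j : ZMod s) : Matrix (Fin n) (Fin m) ℂ :=
  ∑ k : ZMod s, Complex.exp (-2 * Real.pi * Complex.I * (j.val * k.val) / s) • T k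

/-- Block diagonal matrix with blocks `B j`. -/
def blkdiag {n m s : ℕ} [DecidableEq (ZMod s)] (B : ZMod s → Matrix (Fin n) (Fin m) ℂ) :
    Matrix (ZMod s × Fin n) (ZMod s × Fin m) ℂ :=
  fun ia jb => if ia.1 = jb.1 then B ia.1 ia.2 jb.2 else 0

/-! Fix the in-block indices `a`, `b`. The entries of `bcirc T` in rows `(·, a)` and columns
`(·, b)` form the circulant matrix `C` of `c := k ↦ T k a b`, and `F_s ⊗ I` acts on the block
indices only, so everything reduces to `F_s C F_s^* = diag (DFT c)`. The entries of `F_s` are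
`ψ (-(j k)) / √s` for the standard character `ψ` of `ZMod s`; shifting the summation index turns
the `(j, l)` entry into `(DFT c) j · s⁻¹ ∑ q, ψ (q (l - j))`, and by orthogonality of characters
that sum is `s` or `0`. -/

open Kronecker Finset
open scoped ZMod

lemma Matrix.kronecker_one_mul_mul_conjTranspose_kronecker_one_apply {ι α β R : Type*}
    [Fintype ι] [Fintype α] [Fintype β] [DecidableEq α] [DecidableEq β] [CommSemiring R]
    [StarRing R] (A B : Matrix ι ι R) (M : Matrix (ι × α) (ι × β) R) (j l : ι) (a : α) (b : β) :
    ((A ⊗ₖ (1 : Matrix α α R)) * M * (B ⊗ₖ (1 : Matrix β β R))ᴴ) (j, a) (l, b) =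
      (A * of (fun p q => M (p, a) (q, b)) * Bᴴ) j l := by
  simp only [mul_apply, conjTranspose_apply, kroneckerMap_apply, one_apply, Fintype.sum_prod_type,
    mul_ite, ite_mul, mul_one, mul_zero, zero_mul, apply_ite star, star_zero, sum_ite_eq,
    mem_univ, if_true, of_apply]

lemma AddChar.sum_sum_map_neg_mul_mul_sub_mul {R M : Type*} [CommRing R] [Fintype R] [CommRing M]
    (ψ : AddChar R M) (c : R → M) (j l : R) :
    ∑ q, (∑ p, ψ (-(j * p)) * c (p - q)) * ψ (l * q) =
      (∑ k, ψ (-(k * j)) * c k) * ∑ q, ψ (q * (l - j)) := by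
  rw [sum_mul_sum, sum_comm]
  refine sum_congr rfl fun q _ => ?_
  rw [sum_mul]
  refine (Fintype.sum_equiv (Equiv.addRight q) _ _ fun k => ?_).symm
  rw [Equiv.coe_addRight, add_sub_cancel_right, show -(j * (k + q)) = -(k * j) + -(q * j) by ring,
    show q * (l - j) = l * q + -(q * j) by ring, map_add_eq_mul, map_add_eq_mul]
  ring

lemma of_bcirc_map_apply_eq_circulant {n m s : ℕ} {R S : Type*} (f : R → S)
    (T : Tensor3 n m s R) (a : Fin n) (b : Fin m) :
    of (fun i j => (bcirc T).map f (i, a) (j, b)) = circulant (fun k => f (T k a b)) :=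
  rfl

section

variable {s : ℕ} [NeZero s]

lemma ZMod.exp_neg_two_pi_I_mul_val_mul_val_div (j k : ZMod s) :
    Complex.exp (-2 * Real.pi * Complex.I * (j.val * k.val) / s) = ZMod.stdAddChar (-(j * k)) := by
  have : -(j * k) = ((-(j.val * k.val : ℤ) : ℤ) : ZMod s) := by push_cast; simp
  rw [this, ZMod.stdAddChar_coe]; push_cast; ring_nf

lemma dft_apply (j k : ZMod s) : dft s j k = ZMod.stdAddChar (-(j * k)) / Real.sqrt s := by
  rw [← ZMod.exp_neg_two_pi_I_mul_val_mul_val_div]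
  rfl

lemma dft_conjTranspose_apply (j k : ZMod s) :
    (dft s)ᴴ j k = ZMod.stdAddChar (k * j) / Real.sqrt s := by
  rw [conjTranspose_apply, dft_apply, star_div₀, AddChar.map_neg_eq_conj, Complex.star_def,
    Complex.conj_conj, Complex.conj_ofReal]

theorem dft_mul_circulant_mul_conjTranspose_dft (c : ZMod s → ℂ) :
    dft s * circulant c * (dft s)ᴴ = diagonal (𝓕 c) := by
  have hsqrt : ((Real.sqrt s : ℝ) : ℂ) ^ 2 = s := by
    rw [← Complex.ofReal_pow, Real.sq_sqrt (Nat.cast_nonneg s), Complex.ofReal_natCast]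
  ext j l
  calc (dft s * circulant c * (dft s)ᴴ) j l
      = (s : ℂ)⁻¹ *
          ∑ q, (∑ p, ZMod.stdAddChar (-(j * p)) * c (p - q)) * ZMod.stdAddChar (l * q) := by
        simp only [mul_apply, dft_conjTranspose_apply, circulant_apply, dft_apply, sum_mul, mul_sum]
        refine sum_congr rfl fun q _ => sum_congr rfl fun p _ => ?_
        rw [← hsqrt]
        field_simp
    _ = diagonal (𝓕 c) j l := by
        rw [AddChar.sum_sum_map_neg_mul_mul_sub_mul,
          AddChar.sum_mulShift _ (ZMod.isPrimitive_stdAddChar s), diagonal_apply, ZMod.dft_apply,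
          ZMod.card]
        simp only [sub_eq_zero, eq_comm (a := l)]
        split_ifs
        · rw [inv_mul_eq_div, mul_div_cancel_right₀ _ (NeZero.ne (s : ℂ))]
          simp only [smul_eq_mul]
        · simp

lemma fourierBlock_eq_dft {n m : ℕ} (T : Tensor3 n m s ℂ) : fourierBlock T = 𝓕 T := by
  ext j : 1
  simp only [fourierBlock, ZMod.dft_apply, ZMod.exp_neg_two_pi_I_mul_val_mul_val_div, mul_comm j]

lemma ZMod.dft_matrix_apply {n m : ℕ} (Φ : ZMod s → Matrix (Fin n) (Fin m) ℂ) (j : ZMod s)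
    (a : Fin n) (b : Fin m) : 𝓕 Φ j a b = 𝓕 (fun k => Φ k a b) j := by
  simp only [ZMod.dft_apply, Matrix.sum_apply, Matrix.smul_apply]

end

open Kronecker in
/-- `bcirc T` is block diagonalized by the DFT:
`(F_s ⊗ I_n) · bcirc T · (F_s ⊗ I_m)^*` is block diagonal with `j`-th block the `j`-th
DFT component of the frontal slices of `T`. -/
theorem dft_block_diagonalizes_bcirc {n m s : ℕ} [NeZero s] (T : Tensor3 n m s ℝ) :
    (dft s ⊗ₖ (1 : Matrix (Fin n) (Fin n) ℂ)) * (bcirc T).map Complex.ofReal *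
      (dft s ⊗ₖ (1 : Matrix (Fin m) (Fin m) ℂ))ᴴ =
    blkdiag (fourierBlock (fun k => (T k).map Complex.ofReal)) := by
  ext ⟨j, a⟩ ⟨l, b⟩
  rw [kronecker_one_mul_mul_conjTranspose_kronecker_one_apply, of_bcirc_map_apply_eq_circulant,
    dft_mul_circulant_mul_conjTranspose_dft, fourierBlock_eq_dft, diagonal_apply, blkdiag,
    ZMod.dft_matrix_apply]
  simp only [map_apply]
end

section
/- Data informativity for system identification of TPDSs: given state data tensors X_0, X_1 ∈ ℝ^{n×lh×r} collected from a TPDS X(t+1) = A ⋆ X(t), the transition tensor A ∈ ℝ^{n×n×r} is uniquely determined by the constraint X_1 = A ⋆ X_0 if and only if rank(bcirc(X_0)) = nr. -/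
open Matrix Complex

theorem rank_full_iff' {I J : Type} [Fintype I] [Fintype J] [DecidableEq I] (K : Matrix I J ℝ) :
    K.rank = Fintype.card I ↔ ∀ v : I → ℝ, v ᵥ* K = 0 → v = 0 := by
  rw [← Matrix.rank_transpose]
  have hadd := (Kᵀ.mulVecLin).finrank_range_add_finrank_ker
  have hrk : Module.finrank ℝ (LinearMap.range Kᵀ.mulVecLin) = Kᵀ.rank := rfl
  rw [hrk, Module.finrank_pi] at hadd
  have hker : (∀ v : I → ℝ, v ᵥ* K = 0 → v = 0) ↔
      LinearMap.ker Kᵀ.mulVecLin = ⊥ := by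
    rw [LinearMap.ker_eq_bot']
    constructor
    · intro h v hv
      exact h v (by simpa [Matrix.mulVecLin_apply, Matrix.mulVec_transpose] using hv)
    · intro h v hv
      exact h v (by simpa [Matrix.mulVecLin_apply, Matrix.mulVec_transpose] using hv)
  rw [hker]
  constructor
  · intro h
    have : Module.finrank ℝ (LinearMap.ker Kᵀ.mulVecLin) = 0 := by omega
    exact Submodule.finrank_eq_zero.mp this
  · intro h
    rw [h] at hadd
    simpa using hadd

/-- data informativity for system identification of TPDSs: with data
`X₀, X₁` generated by `X₁ = A ⋆ X₀`, the transition tensor is uniquely determined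
iff `rank (bcirc X₀) = n * r`. -/
theorem informativity_system_identification {n M r : ℕ} [NeZero r]
    (X0 X1 : Tensor3 n M r ℝ) (A : Tensor3 n n r ℝ) (hA : X1 = tProd A X0) :
    (∀ A' : Tensor3 n n r ℝ, X1 = tProd A' X0 → A' = A) ↔
      (bcirc X0).rank = n * r := by
  have hcard : Fintype.card (ZMod r × Fin n) = n * r := by
    simp [Fintype.card_prod, ZMod.card, Nat.mul_comm]
  rw [← hcard, rank_full_iff']
  have hmul : ∀ (T : Tensor3 n n r ℝ) (k : ZMod r) (a : Fin n) (b : Fin M),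
      (bcirc T * unfold X0) (k, a) b
        = ∑ p : ZMod r × Fin n, T (k - p.1) a p.2 * X0 p.1 p.2 b := by
    intro T k a b
    simp [Matrix.mul_apply, bcirc, unfold]
  have hvm : ∀ (v : ZMod r × Fin n → ℝ) (i : ZMod r) (b : Fin M),
      (v ᵥ* bcirc X0) (i, b) = ∑ p : ZMod r × Fin n, v p * X0 (p.1 - i) p.2 b := by
    intro v i b
    simp [Matrix.vecMul, dotProduct, bcirc]
  have key : (∀ Δ : Tensor3 n n r ℝ, bcirc Δ * unfold X0 = 0 → Δ = 0)
      ↔ (∀ v : ZMod r × Fin n → ℝ, v ᵥ* bcirc X0 = 0 → v = 0) := by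
    constructor
    · intro h v hv
      rcases Nat.eq_zero_or_pos n with hn | hn
      · funext p
        exfalso
        have := p.2.isLt
        omega
      · set a0 : Fin n := ⟨0, hn⟩
        set Δ : Tensor3 n n r ℝ := fun m a c => if a = a0 then v (-m, c) else 0 with hΔ
        have hΔ0 : Δ = 0 := by
          apply h
          ext ⟨k, a⟩ b
          rw [hmul]
          by_cases ha : a = a0
          · subst ha
            have hz := congrFun hv (-k, b)
            rw [hvm] at hz
            simp only [hΔ, if_pos rfl]
            have hre : ∑ p : ZMod r × Fin n, v (-(k - p.1), p.2) * X0 p.1 p.2 b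
                = ∑ p : ZMod r × Fin n, v p * X0 (p.1 - -k) p.2 b := by
              apply Fintype.sum_equiv
                (Equiv.prodCongr (Equiv.subRight k) (Equiv.refl (Fin n)))
              intro p
              have h1 : -(k - p.1) = p.1 - k := by ring
              have h2 : p.1 - k - -k = p.1 := by ring
              show v (-(k - p.1), p.2) * X0 p.1 p.2 b
                = v (p.1 - k, p.2) * X0 (p.1 - k - -k) p.2 b
              rw [h1, h2]
            rw [hre, hz]
            rfl
          · simp [hΔ, ha]
        funext p
        have hp := congrFun (congrFun (congrFun hΔ0 (-p.1)) a0) p.2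
        simpa [hΔ] using hp
    · intro h Δ hΔ
      funext m a c
      have hva : (fun p : ZMod r × Fin n => Δ (-p.1) a p.2) = 0 := by
        apply h
        funext ib
        obtain ⟨i, b⟩ := ib
        rw [hvm]
        have hz : (bcirc Δ * unfold X0) (-i, a) b = 0 := by rw [hΔ]; rfl
        rw [hmul] at hz
        have hre : ∑ p : ZMod r × Fin n, Δ (-p.1) a p.2 * X0 (p.1 - i) p.2 b
            = ∑ p : ZMod r × Fin n, Δ (-i - p.1) a p.2 * X0 p.1 p.2 b := by
          apply Fintype.sum_equiv
            (Equiv.prodCongr (Equiv.subRight i) (Equiv.refl (Fin n)))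
          intro p
          have h1 : -i - (p.1 - i) = -p.1 := by ring
          show Δ (-p.1) a p.2 * X0 (p.1 - i) p.2 b
            = Δ (-i - (p.1 - i)) a p.2 * X0 (p.1 - i) p.2 b
          rw [h1]
        rw [hre, hz]
        rfl
      have hp := congrFun hva (-m, c)
      simpa using hp
  rw [← key]
  constructor
  · intro h Δ hΔ
    have hAA : (fun k => A k - Δ k) = A := by
      apply h
      rw [hA]
      funext k a b
      show (bcirc A * unfold X0) (k, a) b
        = (bcirc (fun k => A k - Δ k) * unfold X0) (k, a) b
      rw [hmul, hmul]
      have h0 : (bcirc Δ * unfold X0) (k, a) b = 0 := by rw [hΔ]; rfl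
      rw [hmul] at h0
      simp only [Matrix.sub_apply, sub_mul, Finset.sum_sub_distrib, h0, sub_zero]
    funext m a c
    have h2 : A m a c - Δ m a c = A m a c :=
      congrFun (congrFun (congrFun hAA m) a) c
    have : Δ m a c = 0 := by linarith
    exact this
  · intro h A' hA'
    have hΔ : bcirc (fun k => A k - A' k) * unfold X0 = 0 := by
      ext ⟨k, a⟩ b
      rw [hmul]
      have h1 : (bcirc A * unfold X0) (k, a) b = (bcirc A' * unfold X0) (k, a) b :=
        congrFun (congrFun (congrFun (hA.symm.trans hA') k) a) b
      rw [hmul, hmul] at h1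
      simp only [Matrix.sub_apply, sub_mul, Finset.sum_sub_distrib]
      simp [h1]
    have h0 := h _ hΔ
    funext m a c
    have h2 : A m a c - A' m a c = 0 := congrFun (congrFun (congrFun h0 m) a) c
    linarith
end

section
/- If every square matrix over ℂ admits a Schur (or eigenvalue) decomposition, then every tensor T ∈ ℝ^{n×n×s} whose Fourier-domain blocks T_1,…,T_s are each diagonalizable admits a T-eigenvalue decomposition T = U ⋆ D ⋆ U^{-1} with D a T-diagonal tensor (every frontal slice of D in the Fourier domain is diagonal), in the sense that bcirc(T) = bcirc(U)·bcirc(D)·bcirc(U)^{-1}. -/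
open Matrix Complex

noncomputable def omg (s : ℕ) : ℂ := Complex.exp (-2 * Real.pi * Complex.I / s)

noncomputable def ee {s : ℕ} (a : ZMod s) : ℂ := omg s ^ a.val

lemma omg_pow_s (s : ℕ) [NeZero s] : omg s ^ s = 1 := by
  rw [omg, ← Complex.exp_nat_mul]
  have hs : (s : ℂ) ≠ 0 := Nat.cast_ne_zero.mpr (NeZero.ne s)
  have : (s : ℂ) * (-2 * Real.pi * Complex.I / s) = (-1 : ℤ) * (2 * Real.pi * Complex.I) := by
    field_simp; ring
  rw [this, Complex.exp_int_mul_two_pi_mul_I]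

lemma omg_pow_mod (s : ℕ) [NeZero s] (m : ℕ) : omg s ^ m = omg s ^ (m % s) := by
  conv_lhs => rw [← Nat.mod_add_div m s, pow_add, pow_mul, omg_pow_s, one_pow, mul_one]

lemma ee_val_mul {s : ℕ} [NeZero s] (a b : ZMod s) :
    omg s ^ (a.val * b.val) = ee (a * b) := by
  rw [ee, ZMod.val_mul, ← omg_pow_mod]

lemma ee_add {s : ℕ} [NeZero s] (a b : ZMod s) : ee (a + b) = ee a * ee b := by
  rw [ee, ee, ee, ZMod.val_add, ← omg_pow_mod, pow_add]

lemma ee_zero {s : ℕ} [NeZero s] : ee (0 : ZMod s) = 1 := by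
  rw [ee, ZMod.val_zero, pow_zero]

lemma ee_ne_one {s : ℕ} [NeZero s] {a : ZMod s} (ha : a ≠ 0) : ee a ≠ 1 := by
  intro h
  have hs : (s : ℂ) ≠ 0 := Nat.cast_ne_zero.mpr (NeZero.ne s)
  rw [ee, omg, ← Complex.exp_nat_mul, Complex.exp_eq_one_iff] at h
  obtain ⟨m, hm⟩ := h
  have h2 : (2 * (Real.pi : ℂ) * Complex.I) ≠ 0 :=
    mul_ne_zero (mul_ne_zero two_ne_zero (Complex.ofReal_ne_zero.mpr Real.pi_ne_zero))
      Complex.I_ne_zero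
  have hv : (a.val : ℂ) = -m * s := by
    have h4 : -((a.val : ℂ) / s) * (2 * Real.pi * Complex.I)
        = (m : ℂ) * (2 * Real.pi * Complex.I) := by
      rw [← hm]; field_simp
    have h3 := mul_right_cancel₀ h2 h4
    have h5 : (a.val : ℂ) / s = -m := by rw [← h3, neg_neg]
    rw [(div_eq_iff hs).mp h5]
  have hv' : (a.val : ℤ) = -m * s := by exact_mod_cast hv
  have hdvd : (s : ℤ) ∣ (a.val : ℤ) := ⟨-m, by linarith [hv']⟩
  have hdvd' : s ∣ a.val := Int.ofNat_dvd.mp (by exact_mod_cast hdvd)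
  have hne : a.val ≠ 0 := fun h0 => ha (by rwa [← ZMod.val_eq_zero])
  have := Nat.le_of_dvd (Nat.pos_of_ne_zero hne) hdvd'
  exact absurd (ZMod.val_lt a) (not_lt.mpr this)

lemma sum_zmod_val {s : ℕ} [NeZero s] (f : ℕ → ℂ) :
    ∑ k : ZMod s, f k.val = ∑ i ∈ Finset.range s, f i := by
  refine (Finset.sum_bij (fun i _ => ((i : ℕ) : ZMod s)) (fun i _ => Finset.mem_univ _)
    ?_ ?_ ?_).symm
  · intro a ha b hb h
    rwa [ZMod.natCast_eq_natCast_iff', Nat.mod_eq_of_lt (Finset.mem_range.mp ha),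
      Nat.mod_eq_of_lt (Finset.mem_range.mp hb)] at h
  · intro b _
    exact ⟨b.val, Finset.mem_range.mpr (ZMod.val_lt b), ZMod.natCast_rightInverse b⟩
  · intro a ha
    rw [ZMod.val_cast_of_lt (Finset.mem_range.mp ha)]

lemma sum_ee {s : ℕ} [NeZero s] (a : ZMod s) :
    ∑ k : ZMod s, ee (a * k) = if a = 0 then (s : ℂ) else 0 := by
  have : ∀ k : ZMod s, ee (a * k) = (omg s ^ a.val) ^ k.val := by
    intro k; rw [← pow_mul, ee_val_mul]
  simp_rw [this]
  rw [sum_zmod_val (fun i => (omg s ^ a.val) ^ i)]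
  by_cases ha : a = 0
  · subst ha
    simp [ZMod.val_zero, Finset.sum_const]
  · have hz : omg s ^ a.val ≠ 1 := ee_ne_one ha
    have hzs : (omg s ^ a.val) ^ s = 1 := by
      rw [← pow_mul, mul_comm, pow_mul, omg_pow_s, one_pow]
    rw [geom_sum_eq hz, hzs, if_neg ha]
    simp

lemma sum_ee' {s : ℕ} [NeZero s] (a : ZMod s) :
    ∑ k : ZMod s, ee (k * a) = if a = 0 then (s : ℂ) else 0 := by
  simp_rw [mul_comm]; exact sum_ee a

lemma exp_eq_ee {s : ℕ} [NeZero s] (j k : ZMod s) :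
    Complex.exp (-2 * Real.pi * Complex.I * (j.val * k.val) / s) = ee (j * k) := by
  rw [← ee_val_mul, omg, ← Complex.exp_nat_mul]
  congr 1
  push_cast
  ring

lemma fourierBlock_eq {n m s : ℕ} [NeZero s] (T : Tensor3 n m s ℂ) (j : ZMod s) :
    fourierBlock T j = ∑ k : ZMod s, ee (j * k) • T k := by
  unfold fourierBlock; simp_rw [exp_eq_ee]

/-- Unnormalized block Fourier matrix. -/
noncomputable def Fm (n s : ℕ) : Matrix (ZMod s × Fin n) (ZMod s × Fin n) ℂ :=
  fun p q => if p.2 = q.2 then ee (p.1 * q.1) else 0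

/-- Inverse of the block Fourier matrix. -/
noncomputable def Gm (n s : ℕ) : Matrix (ZMod s × Fin n) (ZMod s × Fin n) ℂ :=
  fun p q => if p.2 = q.2 then ee (-(p.1 * q.1)) / s else 0

lemma Gm_mul_Fm (n s : ℕ) [NeZero s] : Gm n s * Fm n s = 1 := by
  have hs : (s : ℂ) ≠ 0 := Nat.cast_ne_zero.mpr (NeZero.ne s)
  ext ⟨j, a⟩ ⟨j', b⟩
  rw [Matrix.mul_apply, Fintype.sum_prod_type]
  simp only [Gm, Fm, ite_mul, mul_ite, zero_mul, mul_zero,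
    Finset.sum_ite_eq, Finset.sum_ite_eq', Finset.mem_univ, if_true,
    Matrix.one_apply, Prod.mk.injEq]
  by_cases hab : a = b
  · subst hab
    have key : ∀ k : ZMod s, ee (-(j * k)) / (s:ℂ) * ee (k * j')
        = ee (k * (j' - j)) / s := by
      intro k
      rw [div_mul_eq_mul_div, ← ee_add]
      congr 2
      ring
    simp_rw [key, and_true, if_true]
    rw [← Finset.sum_div, sum_ee']
    by_cases hjj : j = j'
    · rw [if_pos (by rw [hjj]; ring), if_pos hjj, div_self hs]
    · rw [if_neg (fun hc => hjj (by linear_combination -hc)), if_neg hjj, zero_div]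
  · simp [hab]

lemma Fm_mul_Gm (n s : ℕ) [NeZero s] : Fm n s * Gm n s = 1 := by
  have hs : (s : ℂ) ≠ 0 := Nat.cast_ne_zero.mpr (NeZero.ne s)
  ext ⟨j, a⟩ ⟨j', b⟩
  rw [Matrix.mul_apply, Fintype.sum_prod_type]
  simp only [Gm, Fm, ite_mul, mul_ite, zero_mul, mul_zero,
    Finset.sum_ite_eq, Finset.sum_ite_eq', Finset.mem_univ, if_true,
    Matrix.one_apply, Prod.mk.injEq]
  by_cases hab : a = b
  · subst hab
    have key : ∀ k : ZMod s, ee (j * k) * (ee (-(k * j')) / (s:ℂ))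
        = ee (k * (j - j')) / s := by
      intro k
      rw [mul_div_assoc', ← ee_add]
      congr 2
      ring
    simp_rw [key, and_true, if_true]
    rw [← Finset.sum_div, sum_ee']
    by_cases hjj : j = j'
    · rw [if_pos (by rw [hjj]; ring), if_pos hjj, div_self hs]
    · rw [if_neg (fun hc => hjj (by linear_combination hc)), if_neg hjj, zero_div]
  · simp [hab]

lemma blkdiag_mul {n s : ℕ} [NeZero s] (B C : ZMod s → Matrix (Fin n) (Fin n) ℂ) :
    blkdiag B * blkdiag C = blkdiag (fun j => B j * C j) := by
  ext ⟨j, a⟩ ⟨j', b⟩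
  rw [Matrix.mul_apply, Fintype.sum_prod_type]
  simp only [blkdiag, ite_mul, mul_ite, zero_mul, mul_zero]
  by_cases hjj : j = j'
  · subst hjj
    simp [Matrix.mul_apply]
  · simp [hjj]

lemma blkdiag_one {n s : ℕ} [NeZero s] :
    blkdiag (fun _ : ZMod s => (1 : Matrix (Fin n) (Fin n) ℂ)) = 1 := by
  ext ⟨j, a⟩ ⟨j', b⟩
  simp only [blkdiag, Matrix.one_apply, Prod.mk.injEq]
  by_cases hjj : j = j' <;> by_cases hab : a = b <;> simp [hjj, hab]


lemma sum_ite_push {α β : Type*} [Fintype α] [AddCommMonoid β] (P : Prop) [Decidable P]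
    (f : α → β) : ∑ x : α, (if P then f x else 0) = if P then ∑ x : α, f x else 0 := by
  split <;> simp

/-- Key identity: `bcirc T` is block-diagonalized by the Fourier matrix. -/
lemma bcirc_eq {n s : ℕ} [NeZero s] (Tc : Tensor3 n n s ℂ) :
    bcirc Tc = Gm n s * blkdiag (fourierBlock Tc) * Fm n s := by
  have hs : (s : ℂ) ≠ 0 := Nat.cast_ne_zero.mpr (NeZero.ne s)
  ext ⟨j, a⟩ ⟨j', b⟩
  rw [Matrix.mul_apply]
  simp_rw [Matrix.mul_apply]
  rw [Fintype.sum_prod_type]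
  simp_rw [Fintype.sum_prod_type]
  simp only [Gm, Fm, blkdiag, fourierBlock_eq, Finset.sum_apply, Matrix.sum_apply,
    Matrix.smul_apply, smul_eq_mul, ite_mul, mul_ite, zero_mul, mul_zero, sum_ite_push,
    Finset.sum_ite_eq, Finset.sum_ite_eq', Finset.mem_univ, if_true]
  have key : ∀ (k m : ZMod s), ee (-(j * k)) / (s:ℂ) * (ee (k * m) * Tc m a b) * ee (k * j')
      = ee (k * (m + j' - j)) * Tc m a b / s := by
    intro k m
    have h1 : ee (-(j * k)) * ee (k * m) * ee (k * j') = ee (k * (m + j' - j)) := by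
      rw [← ee_add, ← ee_add]
      congr 1
      ring
    field_simp
    linear_combination Tc m a b * h1
  simp_rw [Finset.mul_sum, Finset.sum_mul, key]
  rw [Finset.sum_comm]
  have key2 : ∀ m : ZMod s, ∑ k : ZMod s, ee (k * (m + j' - j)) * Tc m a b / s
      = if m = j - j' then Tc m a b else 0 := by
    intro m
    rw [← Finset.sum_div, ← Finset.sum_mul, sum_ee']
    by_cases hm : m = j - j'
    · rw [if_pos (by rw [hm]; ring), if_pos hm, mul_comm, mul_div_assoc, div_self hs, mul_one]
    · rw [if_neg (fun hc => hm (by linear_combination hc)), if_neg hm, zero_mul, zero_div]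
  simp_rw [key2]
  rw [Finset.sum_ite_eq', if_pos (Finset.mem_univ _)]
  rfl

/-- Inverse Fourier transform along the third mode. -/
noncomputable def invT {n s : ℕ} [NeZero s] (B : ZMod s → Matrix (Fin n) (Fin n) ℂ) :
    Tensor3 n n s ℂ :=
  fun k => (s : ℂ)⁻¹ • ∑ j : ZMod s, ee (-(j * k)) • B j

lemma fourierBlock_invT {n s : ℕ} [NeZero s] (B : ZMod s → Matrix (Fin n) (Fin n) ℂ)
    (j : ZMod s) : fourierBlock (invT B) j = B j := by
  have hs : (s : ℂ) ≠ 0 := Nat.cast_ne_zero.mpr (NeZero.ne s)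
  rw [fourierBlock_eq]
  ext a b
  simp only [invT, Finset.sum_apply, Matrix.sum_apply, Matrix.smul_apply, smul_eq_mul]
  have key : ∀ (k j' : ZMod s), ee (j * k) * ((s:ℂ)⁻¹ * (ee (-(j' * k)) * B j' a b))
      = ee (k * (j - j')) * B j' a b / s := by
    intro k j'
    have h1 : ee (j * k) * ee (-(j' * k)) = ee (k * (j - j')) := by
      rw [← ee_add]
      congr 1
      ring
    field_simp
    linear_combination B j' a b * h1
  simp_rw [Finset.mul_sum, key]
  rw [Finset.sum_comm]
  have key2 : ∀ j' : ZMod s, ∑ k : ZMod s, ee (k * (j - j')) * B j' a b / s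
      = if j' = j then B j' a b else 0 := by
    intro j'
    rw [← Finset.sum_div, ← Finset.sum_mul, sum_ee']
    by_cases hm : j' = j
    · rw [if_pos (by rw [hm]; ring), if_pos hm, mul_comm, mul_div_assoc, div_self hs, mul_one]
    · rw [if_neg (fun hc => hm (by linear_combination -hc)), if_neg hm, zero_mul, zero_div]
  simp_rw [key2]
  rw [Finset.sum_ite_eq', if_pos (Finset.mem_univ _)]

/-- if every complex square matrix admits a Schur decomposition, then any
tensor whose Fourier-domain blocks are all diagonalizable admits a T-eigenvalue
decomposition `T = U ⋆ D ⋆ U⁻¹` with `D` T-diagonal, in the sense that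
`bcirc T = bcirc U * bcirc D * (bcirc U)⁻¹`. -/
theorem t_eigenvalue_decomposition {n s : ℕ} [NeZero s] (T : Tensor3 n n s ℝ)
    (hschur : ∀ (k : ℕ) (A : Matrix (Fin k) (Fin k) ℂ),
      ∃ (U R : Matrix (Fin k) (Fin k) ℂ),
        U ∈ Matrix.unitaryGroup (Fin k) ℂ ∧ R.BlockTriangular id ∧ A = U * R * Uᴴ)
    (hdiag : ∀ j : ZMod s,
      ∃ (U D : Matrix (Fin n) (Fin n) ℂ), IsUnit U ∧ D.IsDiag ∧
        fourierBlock (fun k => (T k).map Complex.ofReal) j = U * D * U⁻¹) :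
    ∃ (U D : Tensor3 n n s ℂ), IsUnit (bcirc U) ∧
      (∀ j : ZMod s, (fourierBlock D j).IsDiag) ∧
      (bcirc T).map Complex.ofReal = bcirc U * bcirc D * (bcirc U)⁻¹ := by
  classical
  choose Uj Dj hU hD hT using hdiag
  have hGF := Gm_mul_Fm n s
  have hFG := Fm_mul_Gm n s
  set U : Tensor3 n n s ℂ := invT Uj with hUdef
  set D : Tensor3 n n s ℂ := invT Dj with hDdef
  have hbU : bcirc U = Gm n s * blkdiag Uj * Fm n s := by
    rw [bcirc_eq U, show fourierBlock U = Uj from funext (fourierBlock_invT Uj)]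
  have hbD : bcirc D = Gm n s * blkdiag Dj * Fm n s := by
    rw [bcirc_eq D, show fourierBlock D = Dj from funext (fourierBlock_invT Dj)]
  have hUinv : ∀ j, Uj j * (Uj j)⁻¹ = 1 := fun j =>
    Matrix.mul_nonsing_inv _ ((Matrix.isUnit_iff_isUnit_det _).mp (hU j))
  set V : Matrix (ZMod s × Fin n) (ZMod s × Fin n) ℂ :=
    Gm n s * blkdiag (fun j => (Uj j)⁻¹) * Fm n s with hVdef
  have sandwich : ∀ B C : ZMod s → Matrix (Fin n) (Fin n) ℂ,
      (Gm n s * blkdiag B * Fm n s) * (Gm n s * blkdiag C * Fm n s)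
        = Gm n s * blkdiag (fun j => B j * C j) * Fm n s := by
    intro B C
    rw [← blkdiag_mul]
    simp only [Matrix.mul_assoc]
    rw [← Matrix.mul_assoc (Fm n s) (Gm n s), hFG, Matrix.one_mul]
  have h1 : bcirc U * V = 1 := by
    rw [hbU, hVdef, sandwich]
    simp only [hUinv]
    rw [blkdiag_one, Matrix.mul_one, hGF]
  have hinv : (bcirc U)⁻¹ = V := Matrix.inv_eq_right_inv h1
  refine ⟨U, D, ?_, ?_, ?_⟩
  · exact ⟨⟨bcirc U, V, h1, mul_eq_one_comm.mp h1⟩, rfl⟩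
  · intro j
    rw [hDdef, fourierBlock_invT]
    exact hD j
  · have hmap : (bcirc T).map Complex.ofReal
        = bcirc (fun k => (T k).map Complex.ofReal) := rfl
    rw [hmap, bcirc_eq, show fourierBlock (fun k => (T k).map Complex.ofReal)
        = fun j => Uj j * Dj j * (Uj j)⁻¹ from funext hT]
    rw [hinv, hVdef, hbU, hbD, sandwich, sandwich]
end
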